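/- Let n, k ≥ 1 with ⌊(n−1)/k⌋ ≥ 2 (equivalently n ≥ 2k+1), and let A_n be the n×n upper-shift matrix. Then every X ∈ M_n(ℂ) satisfying Xᵀ (A_n)^k X = (A_n)^k is invertible; that is, Sol_{A_n^k} is a group. -/
import Mathlib


open Matrix

/-- The `n × n` nilpotent upper-shift matrix `A_n`. -/
def shiftMat (n : ℕ) : Matrix (Fin n) (Fin n) ℂ :=
  Matrix.of fun i j => if (j : ℕ) = (i : ℕ) + 1 then 1 else 0

lemma shift_pow (n k : ℕ) (i j : Fin n) :
    (shiftMat n ^ k) i j = if (j : ℕ) = (i : ℕ) + k then 1 else 0 := by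
  induction k generalizing i j with
  | zero => simp [Matrix.one_apply, Fin.ext_iff, eq_comm]
  | succ k ih =>
    rw [pow_succ, Matrix.mul_apply]
    have hterm : ∀ l : Fin n, (shiftMat n ^ k) i l * shiftMat n l j
        = (if (l : ℕ) = (i : ℕ) + k then 1 else 0) *
          (if (j : ℕ) = (l : ℕ) + 1 then 1 else 0) := by
      intro l; rw [ih, shiftMat]; rfl
    simp only [hterm]
    by_cases hlt : (i : ℕ) + k < n
    · rw [Finset.sum_eq_single (⟨(i : ℕ) + k, hlt⟩ : Fin n)]
      · simp [add_assoc]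
      · intro b _ hb
        have : (b : ℕ) ≠ (i : ℕ) + k := by
          intro hc; exact hb (Fin.ext hc)
        simp [this]
      · simp
    · have h1 : ∀ b : Fin n, (b : ℕ) ≠ (i : ℕ) + k := by
        intro b hc
        exact hlt (hc ▸ b.isLt)
      have h2 : (j : ℕ) ≠ (i : ℕ) + (k + 1) := by
        intro hc
        have := j.isLt
        omega
      simp [h1, h2]

lemma sum_ite_mul (n m : ℕ) (v : Fin n → ℂ) (j : Fin n) (hj : (j : ℕ) = m) :
    (∑ l : Fin n, (if (l : ℕ) = m then 1 else 0) * v l) = v j := by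
  rw [Finset.sum_eq_single j]
  · simp [hj]
  · intro b _ hb
    have : (b : ℕ) ≠ m := by
      intro hc; exact hb (Fin.ext (by omega))
    simp [this]
  · simp

/-- If `⌊(n-1)/k⌋ ≥ 2`, then every solution of `Xᵀ A_n^k X = A_n^k` is
invertible, i.e. `Sol_{A_n^k}` is a group. -/
theorem stmt_9 (n k : ℕ) (hn : 1 ≤ n) (hk : 1 ≤ k) (h : 2 ≤ (n - 1) / k) :
    ∀ X : Matrix (Fin n) (Fin n) ℂ,
      Xᵀ * shiftMat n ^ k * X = shiftMat n ^ k → IsUnit X := by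
  intro X hX
  have hnk : 2 * k ≤ n - 1 := (Nat.le_div_iff_mul_le hk).1 h
  rw [Matrix.isUnit_iff_isUnit_det, isUnit_iff_ne_zero]
  intro hdet
  obtain ⟨v, hv, hXv⟩ := Matrix.exists_mulVec_eq_zero_iff.2 hdet
  set B := shiftMat n ^ k with hBdef
  have hB : B *ᵥ v = 0 := by
    calc B *ᵥ v = (Xᵀ * B * X) *ᵥ v := by rw [hX]
    _ = Xᵀ *ᵥ (B *ᵥ (X *ᵥ v)) := by rw [← Matrix.mulVec_mulVec, ← Matrix.mulVec_mulVec]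
    _ = 0 := by rw [hXv]; simp
  have hXT : Xᵀ * Bᵀ * X = Bᵀ := by
    have := congrArg Matrix.transpose hX
    simpa [Matrix.transpose_mul, Matrix.mul_assoc] using this
  have hBT : Bᵀ *ᵥ v = 0 := by
    calc Bᵀ *ᵥ v = (Xᵀ * Bᵀ * X) *ᵥ v := by rw [hXT]
    _ = Xᵀ *ᵥ (Bᵀ *ᵥ (X *ᵥ v)) := by rw [← Matrix.mulVec_mulVec, ← Matrix.mulVec_mulVec]
    _ = 0 := by rw [hXv]; simp
  apply hv
  funext j
  by_cases hjk : k ≤ (j : ℕ)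
  · -- use B *ᵥ v = 0 at row j - k
    have hlt : (j : ℕ) - k < n := lt_of_le_of_lt (Nat.sub_le _ _) j.isLt
    have := congrFun hB ⟨(j : ℕ) - k, hlt⟩
    rw [Matrix.mulVec, dotProduct] at this
    simp only [hBdef, shift_pow] at this
    rwa [sum_ite_mul n ((j : ℕ) - k + k) v j (by omega)] at this
  · -- use Bᵀ *ᵥ v = 0 at row j + k
    have hlt : (j : ℕ) + k < n := by
      have := j.isLt
      omega
    have := congrFun hBT ⟨(j : ℕ) + k, hlt⟩
    rw [Matrix.mulVec, dotProduct] at this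
    simp only [hBdef, Matrix.transpose_apply, shift_pow] at this
    have heq : ∀ l : Fin n, (if ((⟨(j : ℕ) + k, hlt⟩ : Fin n) : ℕ) = (l : ℕ) + k then (1:ℂ) else 0) * v l
        = (if (l : ℕ) = (j : ℕ) then 1 else 0) * v l := by
      intro l
      congr 1
      simp only [Fin.val_mk]
      by_cases hc : (l : ℕ) = (j : ℕ)
      · simp [hc]
      · rw [if_neg hc, if_neg (by omega)]
    rw [Finset.sum_congr rfl (fun l _ => heq l)] at this
    rwa [sum_ite_mul n (j : ℕ) v j rfl] at this
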